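/- Let R be a ring, M an R-module, and M₁, M₂, M₃ submodules of M such that the quotients (M₁+M₂)/(M₁∩M₂) and (M₂+M₃)/(M₂∩M₃) are finite. Then (M₁+M₃)/(M₁∩M₃) is finite and Card((M₁+M₃)/(M₁∩M₃)) ≤ Card((M₁+M₂)/(M₁∩M₂)) · Card((M₂+M₃)/(M₂∩M₃)). -/

import Mathlib

/-- The quotient module `(M₁ + M₂)/(M₁ ∩ M₂)` attached to two submodules. -/
abbrev latticeQuot {R M : Type*} [Ring R] [AddCommGroup M] [Module R M]
    (M₁ M₂ : Submodule R M) :=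
  (M₁ ⊔ M₂ : Submodule R M) ⧸ ((M₁ ⊓ M₂).comap (M₁ ⊔ M₂).subtype)

/-!
Viewing submodules as additive subgroups, `(M₁ + M₂)/(M₁ ∩ M₂)` has cardinality
`[M₁ : M₁ ∩ M₂] · [M₂ : M₁ ∩ M₂]`, since `M₁ + M₂ ⊇ M₁ ⊇ M₁ ∩ M₂` and `(M₁ + M₂)/M₁ ≅ M₂/(M₁ ∩ M₂)`.
Each factor obeys a triangle inequality, for subgroups of any group:
`[L : H ∩ L] ≤ [L : H ∩ K ∩ L] = [K ∩ L : H ∩ K ∩ L] · [L : K ∩ L] ≤ [K : H ∩ K] · [L : K ∩ L]`.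
Multiplying the two triangle inequalities gives the bound, and finiteness of relative indices
is transitive.
-/

namespace AddSubgroup

variable {G : Type*} [AddGroup G] (H K L : AddSubgroup G)

theorem relIndex_inf_sup [H.Normal] :
    (H ⊓ K).relIndex (H ⊔ K) = K.relIndex H * H.relIndex K := by
  rw [← relIndex_mul_relIndex (H ⊓ K) H (H ⊔ K) inf_le_left le_sup_left,
    inf_relIndex_left, relIndex_sup_left]

variable {H K L}

theorem relIndex_le_relIndex_mul_relIndex (hHK : H.relIndex K ≠ 0) (hKL : K.relIndex L ≠ 0) :
    H.relIndex L ≤ H.relIndex K * K.relIndex L := by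
  have hHKL : H.relIndex (K ⊓ L) * K.relIndex L = (H ⊓ K).relIndex L :=
    relIndex_inf_mul_relIndex H K L
  calc H.relIndex L ≤ (H ⊓ K).relIndex L :=
        relIndex_le_of_le_left inf_le_left (hHKL ▸ mul_ne_zero
          (mt (relIndex_eq_zero_of_le_right inf_le_left) hHK) hKL)
    _ = H.relIndex (K ⊓ L) * K.relIndex L := hHKL.symm
    _ ≤ H.relIndex K * K.relIndex L :=
        Nat.mul_le_mul_right _ (relIndex_le_of_le_right inf_le_left hHK)

theorem relIndex_mul_relIndex_ne_zero_trans (hHK : K.relIndex H * H.relIndex K ≠ 0)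
    (hKL : L.relIndex K * K.relIndex L ≠ 0) : L.relIndex H * H.relIndex L ≠ 0 :=
  mul_ne_zero (relIndex_ne_zero_trans (left_ne_zero_of_mul hKL) (left_ne_zero_of_mul hHK))
    (relIndex_ne_zero_trans (right_ne_zero_of_mul hHK) (right_ne_zero_of_mul hKL))

theorem relIndex_mul_relIndex_le_mul (hHK : K.relIndex H * H.relIndex K ≠ 0)
    (hKL : L.relIndex K * K.relIndex L ≠ 0) :
    L.relIndex H * H.relIndex L ≤
      (K.relIndex H * H.relIndex K) * (L.relIndex K * K.relIndex L) :=
  calc L.relIndex H * H.relIndex L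
      ≤ (L.relIndex K * K.relIndex H) * (H.relIndex K * K.relIndex L) :=
        Nat.mul_le_mul
          (relIndex_le_relIndex_mul_relIndex (left_ne_zero_of_mul hKL) (left_ne_zero_of_mul hHK))
          (relIndex_le_relIndex_mul_relIndex (right_ne_zero_of_mul hHK) (right_ne_zero_of_mul hKL))
    _ = (K.relIndex H * H.relIndex K) * (L.relIndex K * K.relIndex L) := by ring

end AddSubgroup

theorem Submodule.card_latticeQuot {R M : Type*} [Ring R] [AddCommGroup M] [Module R M]
    (M₁ M₂ : Submodule R M) :
    Nat.card (latticeQuot M₁ M₂) =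
      M₂.toAddSubgroup.relIndex M₁.toAddSubgroup * M₁.toAddSubgroup.relIndex M₂.toAddSubgroup := by
  rw [← AddSubgroup.relIndex_inf_sup, ← Submodule.sup_toAddSubgroup]
  rfl

/-- If `(M₁+M₂)/(M₁∩M₂)` and `(M₂+M₃)/(M₂∩M₃)` are finite then so is
`(M₁+M₃)/(M₁∩M₃)`, with cardinality at most the product of the two
cardinalities. -/
theorem latticeQuot_card_triangle (R : Type*) [Ring R]
    (M : Type*) [AddCommGroup M] [Module R M]
    (M₁ M₂ M₃ : Submodule R M)
    (h₁₂ : Finite (latticeQuot M₁ M₂)) (h₂₃ : Finite (latticeQuot M₂ M₃)) :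
    Finite (latticeQuot M₁ M₃)
      ∧ Nat.card (latticeQuot M₁ M₃)
          ≤ Nat.card (latticeQuot M₁ M₂) * Nat.card (latticeQuot M₂ M₃) := by
  have hc₁₂ : Nat.card (latticeQuot M₁ M₂) ≠ 0 := Nat.card_ne_zero.mpr ⟨inferInstance, h₁₂⟩
  have hc₂₃ : Nat.card (latticeQuot M₂ M₃) ≠ 0 := Nat.card_ne_zero.mpr ⟨inferInstance, h₂₃⟩
  rw [Submodule.card_latticeQuot] at hc₁₂ hc₂₃
  refine ⟨Nat.finite_of_card_ne_zero ?_, ?_⟩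
  · rw [Submodule.card_latticeQuot]
    exact AddSubgroup.relIndex_mul_relIndex_ne_zero_trans hc₁₂ hc₂₃
  · simp only [Submodule.card_latticeQuot]
    exact AddSubgroup.relIndex_mul_relIndex_le_mul hc₁₂ hc₂₃
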